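/- Define G(ξ,t) = ∫_Z e^{2iπ Re⟨ξ,z⟩} dμ̃_t(z). Then there is a constant C ≥ 0, depending only on M, r, and the moment constants C_k (one may take C = 2π M r · sup_{s∈ℝ} Σ_{j=2}^r ∫_Z ‖z‖^{2j−1} dμ̃_s(z), which is finite by the moment bounds), such that for all ξ ∈ Z and all t, t' ∈ ℝ: |G(ξ,t) − G(ξ,t')| ≤ C |t − t'| ‖ξ‖. -/

import Mathlib

open scoped Real
open Finset

local notation "⟪" x ", " y "⟫" => (inner ℂ x y : ℂ)

/-- The characteristic function `G(ξ,t)` of the time-dependent Wigner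
measures `μ̃_t` is Lipschitz in time: `|G(ξ,t) − G(ξ,t')| ≤ C |t−t'| ‖ξ‖`. -/
theorem characteristic_function_time_lipschitz
    {Z : Type*} [NormedAddCommGroup Z] [InnerProductSpace ℂ Z] [CompleteSpace Z]
    [TopologicalSpace.SeparableSpace Z]
    (r : ℕ) (hr : 2 ≤ r) (M : ℝ) (hM : 0 ≤ M)
    (B : ℕ → (ℕ → Z) → (ℕ → Z) → ℂ)
    (hbound : ∀ ℓ ∈ Finset.Icc 2 r, ∀ w z : ℕ → Z,
      ‖B ℓ w z‖ ≤ M * (∏ i ∈ Finset.range ℓ, ‖w i‖) * ∏ i ∈ Finset.range ℓ, ‖z i‖)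
    (hconj : ∀ ℓ ∈ Finset.Icc 2 r, ∀ (w z : ℕ → Z) (i : ℕ), i < ℓ → ∀ (c : ℂ) (x y : Z),
      B ℓ (Function.update w i (c • x + y)) z
        = (starRingEnd ℂ) c * B ℓ (Function.update w i x) z + B ℓ (Function.update w i y) z)
    (hlin : ∀ ℓ ∈ Finset.Icc 2 r, ∀ (w z : ℕ → Z) (i : ℕ), i < ℓ → ∀ (c : ℂ) (x y : Z),
      B ℓ w (Function.update z i (c • x + y))
        = c * B ℓ w (Function.update z i x) + B ℓ w (Function.update z i y))
    (hherm : ∀ ℓ ∈ Finset.Icc 2 r, ∀ w z : ℕ → Z, B ℓ w z = (starRingEnd ℂ) (B ℓ z w))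
    (g : Z → Z)
    (hg : ∀ ξ z : Z, ⟪ξ, g z⟫
      = ∑ ℓ ∈ Finset.Icc 2 r, (ℓ : ℂ) * B ℓ (fun i => if i = 0 then ξ else z) (fun _ => z))
    (U : ℝ → Z →ₗᵢ[ℂ] Z)
    (hU0 : ∀ z : Z, U 0 z = z)
    (hUadd : ∀ s t : ℝ, ∀ z : Z, U (s + t) z = U s (U t z))
    (hUcont : ∀ z : Z, Continuous fun t => U t z)
    [MeasurableSpace Z] [BorelSpace Z]
    (μ : ℝ → MeasureTheory.Measure Z)
    (hprob : ∀ t : ℝ, MeasureTheory.IsProbabilityMeasure (μ t))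
    (hmom : ∀ k : ℕ, ∃ C : ℝ, 0 ≤ C ∧ ∀ t : ℝ,
      ∫⁻ z, (‖z‖₊ : ENNReal) ^ (2 * k) ∂(μ t) ≤ ENNReal.ofReal C)
    (heqInt : ∀ (ξ : Z) (t : ℝ), IntervalIntegrable (fun s =>
        ∫ z, Complex.exp (Complex.I * ((2 * π * (⟪ξ, z⟫).re : ℝ) : ℂ))
          * ((2 * (⟪U (-s) ξ, g (U (-s) z)⟫).re : ℝ) : ℂ) ∂(μ s))
      MeasureTheory.volume 0 t)
    (heq : ∀ (ξ : Z) (t : ℝ),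
      (∫ z, Complex.exp (Complex.I * ((2 * π * (⟪ξ, z⟫).re : ℝ) : ℂ)) ∂(μ t))
        = (∫ z, Complex.exp (Complex.I * ((2 * π * (⟪ξ, z⟫).re : ℝ) : ℂ)) ∂(μ 0))
          - (π : ℂ) * ∫ s in (0:ℝ)..t,
              ∫ z, Complex.exp (Complex.I * ((2 * π * (⟪ξ, z⟫).re : ℝ) : ℂ))
                * ((2 * (⟪U (-s) ξ, g (U (-s) z)⟫).re : ℝ) : ℂ) ∂(μ s))
    (G : Z → ℝ → ℂ)
    (hG : ∀ (ξ : Z) (t : ℝ),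
      G ξ t = ∫ z, Complex.exp (Complex.I * ((2 * π * (⟪ξ, z⟫).re : ℝ) : ℂ)) ∂(μ t)) :
    ∃ C : ℝ, 0 ≤ C ∧ ∀ (ξ : Z) (t t' : ℝ),
      ‖G ξ t - G ξ t'‖ ≤ C * |t - t'| * ‖ξ‖ := by

  classical
  obtain ⟨Cr, hCr0, hCrb⟩ := hmom r
  -- elementary power bound
  have hpow : ∀ (x : ℝ), 0 ≤ x → ∀ m : ℕ, m ≤ 2*r → x ^ m ≤ 1 + x ^ (2*r) := by
    intro x hx m hm
    rcases le_total x 1 with h1 | h1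
    · have h2 : x ^ m ≤ 1 := pow_le_one₀ hx h1
      have h3 : (0:ℝ) ≤ x ^ (2*r) := pow_nonneg hx _
      linarith
    · have h2 : x ^ m ≤ x ^ (2*r) := pow_le_pow_right₀ h1 hm
      linarith
  -- bound on the gradient
  have hg2 : ∀ w : Z, ‖g w‖ ≤ M * (r:ℝ)^2 * (1 + ‖w‖ ^ (2*r)) := by
    intro w
    have hTnn : (0:ℝ) ≤ M * (r:ℝ)^2 * (1 + ‖w‖ ^ (2*r)) := by positivity
    rcases eq_or_lt_of_le (norm_nonneg (g w)) with h0 | h0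
    · rw [← h0]; exact hTnn
    have h1 : ((‖g w‖ : ℂ))^2 = ∑ ℓ ∈ Finset.Icc 2 r,
        (ℓ:ℂ) * B ℓ (fun i => if i = 0 then g w else w) (fun _ => w) := by
      rw [← hg (g w) w, inner_self_eq_norm_sq_to_K]
      norm_cast
    have hterm : ∀ ℓ ∈ Finset.Icc 2 r,
        ‖(ℓ:ℂ) * B ℓ (fun i => if i = 0 then g w else w) (fun _ => w)‖
          ≤ ‖g w‖ * ((r:ℝ) * (M * (1 + ‖w‖ ^ (2*r)))) := by
      intro ℓ hℓ
      obtain ⟨hℓ2, hℓr⟩ := Finset.mem_Icc.mp hℓ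
      obtain ⟨n, rfl⟩ : ∃ n, ℓ = n + 1 := ⟨ℓ - 1, by omega⟩
      have hB := hbound (n+1) hℓ (fun i => if i = 0 then g w else w) (fun _ => w)
      have hp1 : (∏ i ∈ Finset.range (n+1), ‖if i = 0 then g w else w‖)
          = ‖w‖ ^ n * ‖g w‖ := by
        rw [Finset.prod_range_succ']
        simp
      have hp2 : (∏ i ∈ Finset.range (n+1), ‖w‖) = ‖w‖ ^ (n+1) := by
        simp
      rw [hp1, hp2] at hB
      have hexp : ‖w‖ ^ n * ‖w‖ ^ (n+1) = ‖w‖ ^ (2*n+1) := by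
        rw [← pow_add]; ring_nf
      have hle : ‖w‖ ^ (2*n+1) ≤ 1 + ‖w‖ ^ (2*r) := hpow _ (norm_nonneg w) _ (by omega)
      have hnorm : ‖(((n:ℕ)+1 : ℕ):ℂ) * B (n+1) (fun i => if i = 0 then g w else w) (fun _ => w)‖
          = ((n:ℝ)+1) * ‖B (n+1) (fun i => if i = 0 then g w else w) (fun _ => w)‖ := by
        rw [norm_mul, Complex.norm_natCast]
        push_cast
        ring
      rw [hnorm]
      have hc1 : ((n:ℝ)+1) ≤ (r:ℝ) := by exact_mod_cast hℓr
      have hBnn : (0:ℝ) ≤ ‖B (n+1) (fun i => if i = 0 then g w else w) (fun _ => w)‖ :=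
        norm_nonneg _
      have hB2 : ‖B (n+1) (fun i => if i = 0 then g w else w) (fun _ => w)‖
          ≤ ‖g w‖ * (M * (1 + ‖w‖ ^ (2*r))) := by
        calc ‖B (n+1) (fun i => if i = 0 then g w else w) (fun _ => w)‖
            ≤ M * (‖w‖ ^ n * ‖g w‖) * ‖w‖ ^ (n+1) := hB
          _ = ‖g w‖ * (M * (‖w‖ ^ n * ‖w‖ ^ (n+1))) := by ring
          _ = ‖g w‖ * (M * ‖w‖ ^ (2*n+1)) := by rw [hexp]
          _ ≤ ‖g w‖ * (M * (1 + ‖w‖ ^ (2*r))) := by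
              apply mul_le_mul_of_nonneg_left _ (norm_nonneg _)
              exact mul_le_mul_of_nonneg_left hle hM
      calc ((n:ℝ)+1) * ‖B (n+1) (fun i => if i = 0 then g w else w) (fun _ => w)‖
          ≤ (r:ℝ) * ‖B (n+1) (fun i => if i = 0 then g w else w) (fun _ => w)‖ :=
            mul_le_mul_of_nonneg_right hc1 hBnn
        _ ≤ (r:ℝ) * (‖g w‖ * (M * (1 + ‖w‖ ^ (2*r)))) := by
            apply mul_le_mul_of_nonneg_left hB2 (by positivity)
        _ = ‖g w‖ * ((r:ℝ) * (M * (1 + ‖w‖ ^ (2*r)))) := by ring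
    have h2 : ‖g w‖^2 ≤ ∑ ℓ ∈ Finset.Icc 2 r,
        (‖g w‖ * ((r:ℝ) * (M * (1 + ‖w‖ ^ (2*r))))) := by
      calc ‖g w‖^2 = ‖((‖g w‖ : ℂ))^2‖ := by
            rw [norm_pow, Complex.norm_real, Real.norm_eq_abs, abs_of_nonneg (norm_nonneg _)]
        _ = ‖∑ ℓ ∈ Finset.Icc 2 r,
              (ℓ:ℂ) * B ℓ (fun i => if i = 0 then g w else w) (fun _ => w)‖ := by rw [h1]
        _ ≤ ∑ ℓ ∈ Finset.Icc 2 r,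
              ‖(ℓ:ℂ) * B ℓ (fun i => if i = 0 then g w else w) (fun _ => w)‖ :=
            norm_sum_le _ _
        _ ≤ ∑ ℓ ∈ Finset.Icc 2 r,
              (‖g w‖ * ((r:ℝ) * (M * (1 + ‖w‖ ^ (2*r))))) := Finset.sum_le_sum hterm
    rw [Finset.sum_const] at h2
    have hcard : ((Finset.Icc 2 r).card : ℝ) ≤ (r:ℝ) := by
      rw [Nat.card_Icc]
      exact_mod_cast Nat.le_of_lt_succ (by omega)
    have h3 : ‖g w‖^2 ≤ ‖g w‖ * (M * (r:ℝ)^2 * (1 + ‖w‖ ^ (2*r))) := by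
      have hnn : (0:ℝ) ≤ ‖g w‖ * ((r:ℝ) * (M * (1 + ‖w‖ ^ (2*r)))) := by positivity
      calc ‖g w‖^2 ≤ ((Finset.Icc 2 r).card : ℝ) *
            (‖g w‖ * ((r:ℝ) * (M * (1 + ‖w‖ ^ (2*r))))) := by
              rw [nsmul_eq_mul] at h2; exact h2
        _ ≤ (r:ℝ) * (‖g w‖ * ((r:ℝ) * (M * (1 + ‖w‖ ^ (2*r))))) :=
            mul_le_mul_of_nonneg_right hcard hnn
        _ = ‖g w‖ * (M * (r:ℝ)^2 * (1 + ‖w‖ ^ (2*r))) := by ring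
    nlinarith [h3]
  -- uniform bound on the inner integral
  have hFbound : ∀ (ξ : Z) (s : ℝ),
      ‖∫ z, Complex.exp (Complex.I * ((2 * π * (⟪ξ, z⟫).re : ℝ) : ℂ))
          * ((2 * (⟪U (-s) ξ, g (U (-s) z)⟫).re : ℝ) : ℂ) ∂(μ s)‖
        ≤ 2 * ‖ξ‖ * (M * (r:ℝ)^2 * (1 + Cr)) := by
    intro ξ s
    haveI := hprob s
    set c : ℝ := 2 * ‖ξ‖ * (M * (r:ℝ)^2) with hc
    have hc0 : 0 ≤ c := by positivity
    have hpt : ∀ z : Z,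
        ‖Complex.exp (Complex.I * ((2 * π * (⟪ξ, z⟫).re : ℝ) : ℂ))
          * ((2 * (⟪U (-s) ξ, g (U (-s) z)⟫).re : ℝ) : ℂ)‖
        ≤ c * (1 + ‖z‖ ^ (2*r)) := by
      intro z
      have hexp1 : ‖Complex.exp (Complex.I * ((2 * π * (⟪ξ, z⟫).re : ℝ) : ℂ))‖ = 1 := by
        rw [Complex.norm_exp]
        simp
      rw [norm_mul, hexp1, one_mul, Complex.norm_real, Real.norm_eq_abs, abs_mul]
      have h1 : |(⟪U (-s) ξ, g (U (-s) z)⟫).re| ≤ ‖ξ‖ * ‖g (U (-s) z)‖ := by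
        calc |(⟪U (-s) ξ, g (U (-s) z)⟫).re| ≤ ‖⟪U (-s) ξ, g (U (-s) z)⟫‖ :=
              Complex.abs_re_le_norm _
          _ ≤ ‖U (-s) ξ‖ * ‖g (U (-s) z)‖ := norm_inner_le_norm _ _
          _ = ‖ξ‖ * ‖g (U (-s) z)‖ := by rw [(U (-s)).norm_map]
      have h2 : ‖g (U (-s) z)‖ ≤ M * (r:ℝ)^2 * (1 + ‖z‖ ^ (2*r)) := by
        have := hg2 (U (-s) z)
        rwa [(U (-s)).norm_map] at this
      calc |(2:ℝ)| * |(⟪U (-s) ξ, g (U (-s) z)⟫).re|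
          ≤ 2 * (‖ξ‖ * ‖g (U (-s) z)‖) := by
            rw [abs_of_nonneg (by norm_num : (0:ℝ) ≤ 2)]
            exact mul_le_mul_of_nonneg_left h1 (by norm_num)
        _ ≤ 2 * (‖ξ‖ * (M * (r:ℝ)^2 * (1 + ‖z‖ ^ (2*r)))) := by
            apply mul_le_mul_of_nonneg_left _ (by norm_num)
            exact mul_le_mul_of_nonneg_left h2 (norm_nonneg ξ)
        _ = c * (1 + ‖z‖ ^ (2*r)) := by rw [hc]; ring
    have hlin1 : (∫⁻ z, ENNReal.ofReal
        ‖Complex.exp (Complex.I * ((2 * π * (⟪ξ, z⟫).re : ℝ) : ℂ))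
          * ((2 * (⟪U (-s) ξ, g (U (-s) z)⟫).re : ℝ) : ℂ)‖ ∂(μ s))
        ≤ ENNReal.ofReal (c * (1 + Cr)) := by
      calc (∫⁻ z, ENNReal.ofReal
            ‖Complex.exp (Complex.I * ((2 * π * (⟪ξ, z⟫).re : ℝ) : ℂ))
              * ((2 * (⟪U (-s) ξ, g (U (-s) z)⟫).re : ℝ) : ℂ)‖ ∂(μ s))
          ≤ ∫⁻ z, ENNReal.ofReal (c * (1 + ‖z‖ ^ (2*r))) ∂(μ s) :=
            MeasureTheory.lintegral_mono (fun z => ENNReal.ofReal_le_ofReal (hpt z))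
        _ = ∫⁻ z, ENNReal.ofReal c * ENNReal.ofReal (1 + ‖z‖ ^ (2*r)) ∂(μ s) := by
            simp_rw [ENNReal.ofReal_mul hc0]
        _ = ENNReal.ofReal c * ∫⁻ z, ENNReal.ofReal (1 + ‖z‖ ^ (2*r)) ∂(μ s) :=
            MeasureTheory.lintegral_const_mul' _ _ ENNReal.ofReal_ne_top
        _ = ENNReal.ofReal c * ∫⁻ z, (1 + ((‖z‖₊ : ENNReal)) ^ (2*r)) ∂(μ s) := by
            congr 1
            apply MeasureTheory.lintegral_congr
            intro z
            rw [ENNReal.ofReal_add (by norm_num) (by positivity), ENNReal.ofReal_one,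
              ENNReal.ofReal_pow (norm_nonneg z), ofReal_norm_eq_enorm, enorm_eq_nnnorm]
        _ = ENNReal.ofReal c *
            (1 + ∫⁻ z, ((‖z‖₊ : ENNReal)) ^ (2*r) ∂(μ s)) := by
            rw [MeasureTheory.lintegral_add_left measurable_const]
            simp [MeasureTheory.lintegral_one]
        _ ≤ ENNReal.ofReal c * (1 + ENNReal.ofReal Cr) := by
            apply mul_le_mul_right (add_le_add_right (hCrb s) 1)
        _ = ENNReal.ofReal (c * (1 + Cr)) := by
            rw [ENNReal.ofReal_mul hc0, ENNReal.ofReal_add (by norm_num) hCr0,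
              ENNReal.ofReal_one]
    calc ‖∫ z, Complex.exp (Complex.I * ((2 * π * (⟪ξ, z⟫).re : ℝ) : ℂ))
            * ((2 * (⟪U (-s) ξ, g (U (-s) z)⟫).re : ℝ) : ℂ) ∂(μ s)‖
        ≤ (∫⁻ z, ENNReal.ofReal
            ‖Complex.exp (Complex.I * ((2 * π * (⟪ξ, z⟫).re : ℝ) : ℂ))
              * ((2 * (⟪U (-s) ξ, g (U (-s) z)⟫).re : ℝ) : ℂ)‖ ∂(μ s)).toReal :=
          MeasureTheory.norm_integral_le_lintegral_norm _
      _ ≤ c * (1 + Cr) := ENNReal.toReal_le_of_le_ofReal (by positivity) hlin1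
      _ = 2 * ‖ξ‖ * (M * (r:ℝ)^2 * (1 + Cr)) := by rw [hc]; ring
  -- put things together
  have hCnn : (0:ℝ) ≤ 2 * π * (M * (r:ℝ)^2 * (1 + Cr)) := by
    have h1 : (0:ℝ) ≤ M * (r:ℝ)^2 * (1 + Cr) := by positivity
    have h2 : (0:ℝ) ≤ 2 * π := by positivity
    exact mul_nonneg h2 h1
  refine ⟨2 * π * (M * (r:ℝ)^2 * (1 + Cr)), hCnn, ?_⟩
  intro ξ t t'
  set F : ℝ → ℂ := fun s =>
    ∫ z, Complex.exp (Complex.I * ((2 * π * (⟪ξ, z⟫).re : ℝ) : ℂ))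
      * ((2 * (⟪U (-s) ξ, g (U (-s) z)⟫).re : ℝ) : ℂ) ∂(μ s) with hF
  have hsplit : (∫ s in (0:ℝ)..t, F s) - (∫ s in (0:ℝ)..t', F s)
      = ∫ s in t'..t, F s := by
    have h := intervalIntegral.integral_add_adjacent_intervals
      ((heqInt ξ t').symm) (heqInt ξ t)
    rw [intervalIntegral.integral_symm 0 t'] at h
    linear_combination h
  have hdiff : G ξ t - G ξ t' = -(π:ℂ) * ∫ s in t'..t, F s := by
    rw [hG, hG, heq ξ t, heq ξ t', ← hsplit]
    ring
  rw [hdiff, norm_mul]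
  have h1 : ‖(-(π:ℂ))‖ = π := by
    rw [norm_neg, Complex.norm_real, Real.norm_eq_abs, abs_of_nonneg Real.pi_nonneg]
  have h2 : ‖∫ s in t'..t, F s‖ ≤ (2 * ‖ξ‖ * (M * (r:ℝ)^2 * (1 + Cr))) * |t - t'| :=
    intervalIntegral.norm_integral_le_of_norm_le_const (fun s _ => hFbound ξ s)
  rw [h1]
  calc π * ‖∫ s in t'..t, F s‖
      ≤ π * ((2 * ‖ξ‖ * (M * (r:ℝ)^2 * (1 + Cr))) * |t - t'|) :=
        mul_le_mul_of_nonneg_left h2 Real.pi_nonneg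
    _ = 2 * π * (M * (r:ℝ)^2 * (1 + Cr)) * |t - t'| * ‖ξ‖ := by ring
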